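/- The function w is a classical subsolution of the two-dimensional equation: for every (y,z) ∈ ℝ², the function z ↦ (9/8)·∂w/∂z(y,z) + (3/8)·|∂w/∂z(y,z)| is differentiable in z, and the divergence D(y,z) := ∂²w/∂y²(y,z) + ∂/∂z[(9/8)·∂w/∂z + (3/8)·|∂w/∂z|](y,z) satisfies D(y,z) = (1/4)(1 − cos y)·e^{−z} when cos y ≥ −1/3 and D(y,z) = (1/2)(1 + cos y)·e^{−z} when cos y ≤ −1/3; in particular D(y,z) ≥ 0 everywhere, with strict inequality D(y,z) > 0 whenever sin y ≠ 0. -/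

import Mathlib

/-- `w(y,z) = (1/3 + cos y)·e^{−z}`. -/
noncomputable def w (y z : ℝ) : ℝ := (1/3 + Real.cos y) * Real.exp (-z)

/-- The divergence `D(y,z) = ∂²w/∂y² + ∂/∂z[(9/8)·∂w/∂z + (3/8)·|∂w/∂z|]`. -/
noncomputable def wdiv (y z : ℝ) : ℝ :=
  deriv (fun s => deriv (fun r => w r z) s) y
    + deriv (fun t => (9/8) * deriv (fun s => w y s) t + (3/8) * |deriv (fun s => w y s) t|) z

lemma hasDerivAt_cexp (c t : ℝ) :
    HasDerivAt (fun s : ℝ => c * Real.exp (-s)) (-c * Real.exp (-t)) t := by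
  have h := ((Real.hasDerivAt_exp (-t)).comp t (hasDerivAt_neg t)).const_mul c
  exact h.congr_deriv (by ring)

lemma deriv_wz (y t : ℝ) :
    deriv (fun s => w y s) t = -(1/3 + Real.cos y) * Real.exp (-t) := by
  simpa [w] using (hasDerivAt_cexp (1/3 + Real.cos y) t).deriv

lemma deriv_wy (z s : ℝ) :
    deriv (fun r => w r z) s = -Real.sin s * Real.exp (-z) := by
  have h : HasDerivAt (fun r => w r z) (-Real.sin s * Real.exp (-z)) s := by
    have h1 : HasDerivAt (fun r : ℝ => 1/3 + Real.cos r) (-Real.sin s) s :=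
      (Real.hasDerivAt_cos s).const_add (1/3)
    simpa [w] using h1.mul_const (Real.exp (-z))
  exact h.deriv

/-- `w` is a classical subsolution: `z ↦ (9/8)∂w/∂z + (3/8)|∂w/∂z|` is differentiable in `z`,
the divergence `D` satisfies `D = (1/4)(1 − cos y)e^{−z}` when `cos y ≥ −1/3` and
`D = (1/2)(1 + cos y)e^{−z}` when `cos y ≤ −1/3`; in particular `D ≥ 0` everywhere,
with `D > 0` whenever `sin y ≠ 0`. -/
theorem stmt_8 (y z : ℝ) :
    DifferentiableAt ℝ
      (fun t => (9/8) * deriv (fun s => w y s) t + (3/8) * |deriv (fun s => w y s) t|) z ∧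
    (-(1/3) ≤ Real.cos y → wdiv y z = (1/4) * (1 - Real.cos y) * Real.exp (-z)) ∧
    (Real.cos y ≤ -(1/3) → wdiv y z = (1/2) * (1 + Real.cos y) * Real.exp (-z)) ∧
    0 ≤ wdiv y z ∧
    (Real.sin y ≠ 0 → 0 < wdiv y z) := by
  set C : ℝ := (9/8) * (-(1/3 + Real.cos y)) + (3/8) * |1/3 + Real.cos y| with hC
  have hfun : (fun t => (9/8) * deriv (fun s => w y s) t
      + (3/8) * |deriv (fun s => w y s) t|) = fun t => C * Real.exp (-t) := by
    funext t
    rw [deriv_wz]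
    rw [abs_mul, abs_of_pos (Real.exp_pos (-t)), abs_neg]
    rw [hC]; ring
  have hd : HasDerivAt (fun t => (9/8) * deriv (fun s => w y s) t
      + (3/8) * |deriv (fun s => w y s) t|) (-C * Real.exp (-z)) z := by
    rw [hfun]; exact hasDerivAt_cexp C z
  have hyy : deriv (fun s => deriv (fun r => w r z) s) y = -Real.cos y * Real.exp (-z) := by
    have h : HasDerivAt (fun s => deriv (fun r => w r z) s) (-Real.cos y * Real.exp (-z)) y := by
      have h1 : HasDerivAt (fun s : ℝ => -Real.sin s * Real.exp (-z))
          (-Real.cos y * Real.exp (-z)) y := by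
        simpa using ((Real.hasDerivAt_sin y).neg).mul_const (Real.exp (-z))
      refine h1.congr_of_eventuallyEq ?_
      filter_upwards with s using (deriv_wy z s)
    exact h.deriv
  have hwdiv : wdiv y z = (-Real.cos y - C) * Real.exp (-z) := by
    rw [wdiv, hyy, hd.deriv]; ring
  have hep := Real.exp_pos (-z)
  have hcos1 := Real.neg_one_le_cos y
  have hcos2 := Real.cos_le_one y
  constructor
  · exact hd.differentiableAt
  have hcase1 : -(1/3) ≤ Real.cos y → wdiv y z = (1/4) * (1 - Real.cos y) * Real.exp (-z) := by
    intro h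
    have habs : |1/3 + Real.cos y| = 1/3 + Real.cos y := abs_of_nonneg (by linarith)
    rw [hwdiv, hC, habs]; ring
  have hcase2 : Real.cos y ≤ -(1/3) → wdiv y z = (1/2) * (1 + Real.cos y) * Real.exp (-z) := by
    intro h
    have habs : |1/3 + Real.cos y| = -(1/3 + Real.cos y) := abs_of_nonpos (by linarith)
    rw [hwdiv, hC, habs]; ring
  refine ⟨hcase1, hcase2, ?_, ?_⟩
  · rcases le_total (-(1/3)) (Real.cos y) with h | h
    · rw [hcase1 h]; nlinarith
    · rw [hcase2 h]; nlinarith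
  · intro hs
    have h1 : Real.cos y ≠ 1 := fun h => hs (by
      have := Real.sin_sq_add_cos_sq y; nlinarith)
    have h2 : Real.cos y ≠ -1 := fun h => hs (by
      have := Real.sin_sq_add_cos_sq y; nlinarith)
    rcases le_total (-(1/3)) (Real.cos y) with h | h
    · rw [hcase1 h]
      have : Real.cos y < 1 := lt_of_le_of_ne hcos2 h1
      nlinarith
    · rw [hcase2 h]
      have : -1 < Real.cos y := lt_of_le_of_ne hcos1 (Ne.symm h2)
      nlinarith
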